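/- arXiv:1102.2868 — 3 statements merged into one kernel-verified Lean document; each statement's English description precedes it below -/
import Mathlib

section
/- Let P₀ > 0 and let I : ℕ → ℝ be nonincreasing with I(i) ≥ P₀ for all 1 ≤ i ≤ k̲−1 (where k̲ = min{k ≥ 1 : I(k) < P₀} is assumed finite), and let N = Σ_{i ≥ k̲} I(i) be finite. Then max over k ∈ ℕ of min over l ∈ {0,...,k} of (1/(l+1))·C((P₀ + Σ_{i=k-l+1}^{k} I(i))/(1 + Σ_{i>k} I(i))) is at least (1/k̲)·C(k̲·P₀/(1+N)), where C(x)=log₂(1+x). -/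
/-! Take `k = k̲ - 1`, so that the interference tail is `N` and every interferer in the window
`[k - l + 1, k]` has power at least `P₀`. The `l`-th term of the minimum is then at least
`(1/(l+1)) C((l+1) P₀/(1+N))`, and `x ↦ C(x a)/x` is nonincreasing (Bernoulli's inequality, i.e.
concavity of `log`), so this is at least `(1/k̲) C(k̲ P₀/(1+N))`. -/

noncomputable def C (x : ℝ) : ℝ := Real.logb 2 (1 + x)

lemma C_le_C {x y : ℝ} (hx : 0 ≤ x) (hxy : x ≤ y) : C x ≤ C y :=
  Real.logb_le_logb_of_le one_lt_two (by linarith) (by linarith)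

lemma one_div_mul_C_mul_le {a x y : ℝ} (ha : 0 ≤ a) (hx : 0 < x) (hxy : x ≤ y) :
    1 / y * C (y * a) ≤ 1 / x * C (x * a) := by
  have hy : 0 < y := hx.trans_le hxy
  have hxa : 0 < 1 + x * a := by positivity
  have bernoulli : 1 + y * a ≤ (1 + x * a) ^ (y / x) := by
    have := one_add_mul_self_le_rpow_one_add (s := x * a) (by nlinarith)
      ((one_le_div hx).2 hxy)
    rwa [show y / x * (x * a) = y * a by field_simp] at this
  have hlog : C (y * a) ≤ y / x * C (x * a) := by
    unfold C
    rw [← Real.logb_rpow_eq_mul_logb_of_pos hxa]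
    exact Real.logb_le_logb_of_le one_lt_two (by positivity) bernoulli
  calc 1 / y * C (y * a) ≤ 1 / y * (y / x * C (x * a)) := by gcongr
    _ = 1 / x * C (x * a) := by field_simp

lemma one_div_mul_C_le_of_mul_le_sum {P N S : ℝ} (hP : 0 ≤ P) (hN : 0 ≤ N) {l n : ℕ}
    (hln : l + 1 ≤ n) (hS : l * P ≤ S) :
    1 / (n : ℝ) * C (n * P / (1 + N)) ≤ 1 / (l + 1 : ℝ) * C ((P + S) / (1 + N)) := by
  have ha : 0 ≤ P / (1 + N) := by positivity
  have hlt : ((l + 1 : ℕ) : ℝ) ≤ n := by exact_mod_cast hln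
  calc 1 / (n : ℝ) * C (n * P / (1 + N)) = 1 / (n : ℝ) * C (n * (P / (1 + N))) := by
        rw [mul_div_assoc]
    _ ≤ 1 / ((l + 1 : ℕ) : ℝ) * C ((l + 1 : ℕ) * (P / (1 + N))) :=
        one_div_mul_C_mul_le ha (by positivity) hlt
    _ ≤ 1 / (l + 1 : ℝ) * C ((P + S) / (1 + N)) := by
        push_cast
        refine mul_le_mul_of_nonneg_left (C_le_C (by positivity) ?_) (by positivity)
        rw [← mul_div_assoc]
        gcongr
        linarith

theorem stmt_5_general (P0 : ℝ) (hP : 0 < P0) (I : ℕ → ℝ) (hnn : ∀ i, 0 ≤ I i)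
    (kb : ℕ) (hkb1 : 1 ≤ kb)
    (hge : ∀ i, 1 ≤ i → i ≤ kb - 1 → P0 ≤ I i) :
    (1 / (kb : ℝ)) * C ((kb : ℝ) * P0 / (1 + ∑' i, I (i + kb))) ≤
    ⨆ k : ℕ, (Finset.range (k + 1)).inf' Finset.nonempty_range_add_one
      (fun l => (1 / (l + 1 : ℝ)) *
        C ((P0 + ∑ i ∈ Finset.Icc (k - l + 1) k, I i) /
           (1 + ∑' i, I (i + k + 1)))) := by
  refine le_ciSup_of_le ⟨C P0, Set.forall_mem_range.2 fun k => ?_⟩ (kb - 1)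
    (Finset.le_inf' _ _ fun l hl => ?_)
  · refine (Finset.inf'_le _ (Finset.mem_range.2 k.succ_pos)).trans ?_
    have hT : 0 ≤ ∑' i, I (i + k + 1) := tsum_nonneg fun i => hnn _
    simp only [Nat.cast_zero, zero_add, div_one, one_mul, tsub_zero,
      Finset.Icc_eq_empty_of_lt (Nat.lt_succ_self k), Finset.sum_empty, add_zero]
    exact C_le_C (div_nonneg hP.le (by linarith)) (div_le_self hP.le (by linarith))
  · have hl : l + 1 ≤ kb := by rw [Finset.mem_range] at hl; omega
    have htail : ∑' i, I (i + (kb - 1) + 1) = ∑' i, I (i + kb) := by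
      congr 1 with i
      congr 1
      omega
    have hwindow : (l : ℝ) * P0 ≤ ∑ i ∈ Finset.Icc (kb - 1 - l + 1) (kb - 1), I i := by
      have := (Finset.Icc (kb - 1 - l + 1) (kb - 1)).card_nsmul_le_sum I P0 fun i hi => by
        rw [Finset.mem_Icc] at hi
        exact hge i (by omega) hi.2
      rwa [Nat.card_Icc, show kb - 1 + 1 - (kb - 1 - l + 1) = l by omega, nsmul_eq_mul] at this
    rw [htail]
    exact one_div_mul_C_le_of_mul_le_sum hP.le (tsum_nonneg fun i => hnn _) hl hwindow

theorem stmt_5 (P0 : ℝ) (hP : 0 < P0) (I : ℕ → ℝ) (hnn : ∀ i, 0 ≤ I i)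
    (hanti : ∀ i j, 1 ≤ i → i ≤ j → I j ≤ I i) (hsum : Summable I)
    (kb : ℕ) (hkb1 : 1 ≤ kb) (hkbI : I kb < P0)
    (hkbmin : ∀ k, 1 ≤ k → I k < P0 → kb ≤ k)
    (hge : ∀ i, 1 ≤ i → i ≤ kb - 1 → P0 ≤ I i) :
    (1 / (kb : ℝ)) * C ((kb : ℝ) * P0 / (1 + ∑' i, I (i + kb))) ≤
    ⨆ k : ℕ, (Finset.range (k + 1)).inf' Finset.nonempty_range_add_one
      (fun l => (1 / (l + 1 : ℝ)) *
        C ((P0 + ∑ i ∈ Finset.Icc (k - l + 1) k, I i) /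
           (1 + ∑' i, I (i + k + 1)))) :=
  stmt_5_general P0 hP I hnn kb hkb1 hge
end

section
/- Let k ≥ 1 and P : Fin k → ℝ>0, and let N > 0 be a noise power. Suppose R : Fin k → ℝ≥0 satisfies: there is a subset T of a subset S of Fin k with Σ_{i∈T} R(i) = C(Σ_{i∈T} P(i)/(N + Σ_{i∉S} P(i))), and for every subset V with T ⊊ V ⊆ S, Σ_{i∈V} R(i) < C(Σ_{i∈V} P(i)/(N + Σ_{i∉S} P(i))). Then for every nonempty subset W ⊆ S \ T, Σ_{i∈W} R(i) < C(Σ_{i∈W} P(i)/(N + Σ_{i∈T} P(i) + Σ_{i∉S} P(i))), where C(x) = log₂(1+x). -/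
open Finset

lemma C_add_div (D a b : ℝ) (hD : 0 < D) (ha : 0 ≤ a) (hb : 0 ≤ b) :
    C ((a + b) / D) = C (a / D) + C (b / (D + a)) := by
  have hDa : 0 < D + a := by linarith
  have hprod : 1 + (a + b) / D = (1 + a / D) * (1 + b / (D + a)) := by
    field_simp
    ring
  unfold C
  rw [hprod, Real.logb_mul (by positivity) (by positivity)]

lemma sum_lt_C_of_tight_of_lt {ι : Type*} [DecidableEq ι] {R P : ι → ℝ} {D : ℝ}
    {T W : Finset ι} (hD : 0 < D) (hPT : 0 ≤ ∑ i ∈ T, P i) (hPW : 0 ≤ ∑ i ∈ W, P i)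
    (hTW : Disjoint T W)
    (htight : ∑ i ∈ T, R i = C ((∑ i ∈ T, P i) / D))
    (hloose : ∑ i ∈ T ∪ W, R i < C ((∑ i ∈ T ∪ W, P i) / D)) :
    ∑ i ∈ W, R i < C ((∑ i ∈ W, P i) / (D + ∑ i ∈ T, P i)) := by
  rw [sum_union hTW, sum_union hTW, htight, C_add_div D _ _ hD hPT hPW] at hloose
  linarith

theorem stmt_7_general (k : ℕ) (P : Fin k → ℝ) (hP : ∀ i, 0 < P i)
    (N : ℝ) (hN : 0 < N) (R : Fin k → ℝ)
    (T S : Finset (Fin k)) (hTS : T ⊆ S)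
    (htight : ∑ i ∈ T, R i =
      C ((∑ i ∈ T, P i) / (N + ∑ i ∈ Sᶜ, P i)))
    (hloose : ∀ V : Finset (Fin k), T ⊂ V → V ⊆ S →
      ∑ i ∈ V, R i < C ((∑ i ∈ V, P i) / (N + ∑ i ∈ Sᶜ, P i))) :
    ∀ W : Finset (Fin k), W.Nonempty → W ⊆ S \ T →
      ∑ i ∈ W, R i <
        C ((∑ i ∈ W, P i) / (N + ∑ i ∈ T, P i + ∑ i ∈ Sᶜ, P i)) := by
  intro W hW hWST
  have hTW : Disjoint T W := disjoint_sdiff.mono_right hWST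
  have hTV : T ⊂ T ∪ W := by
    obtain ⟨w, hw⟩ := hW
    exact (ssubset_iff_of_subset subset_union_left).mpr
      ⟨w, mem_union_right _ hw, (mem_sdiff.mp (hWST hw)).2⟩
  have hVS : T ∪ W ⊆ S := union_subset hTS (hWST.trans sdiff_subset)
  have hnonneg : ∀ U : Finset (Fin k), 0 ≤ ∑ i ∈ U, P i := fun U =>
    sum_nonneg fun i _ => (hP i).le
  rw [add_right_comm]
  exact sum_lt_C_of_tight_of_lt (by linarith [hnonneg Sᶜ]) (hnonneg T) (hnonneg W) hTW
    htight (hloose _ hTV hVS)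

theorem stmt_7 (k : ℕ) (hk : 1 ≤ k) (P : Fin k → ℝ) (hP : ∀ i, 0 < P i)
    (N : ℝ) (hN : 0 < N) (R : Fin k → ℝ) (hR : ∀ i, 0 ≤ R i)
    (T S : Finset (Fin k)) (hTS : T ⊆ S)
    (htight : ∑ i ∈ T, R i =
      C ((∑ i ∈ T, P i) / (N + ∑ i ∈ Sᶜ, P i)))
    (hloose : ∀ V : Finset (Fin k), T ⊂ V → V ⊆ S →
      ∑ i ∈ V, R i < C ((∑ i ∈ V, P i) / (N + ∑ i ∈ Sᶜ, P i))) :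
    ∀ W : Finset (Fin k), W.Nonempty → W ⊆ S \ T →
      ∑ i ∈ W, R i <
        C ((∑ i ∈ W, P i) / (N + ∑ i ∈ T, P i + ∑ i ∈ Sᶜ, P i)) :=
  stmt_7_general k P hP N hN R T S hTS htight hloose
end

section
/- Let P₀ > 0 and I : ℕ≥1 → ℝ≥0 nonincreasing with finite sum. For each finite subset S of {0,1,...,K} containing 0, the symmetric rate of the augmented MAC region F(S) is maximized over subsets of size k+1 by S = {0,1,...,k}: i.e., for any S with |S| = k+1, 0 ∈ S, min_{T ⊆ S∖{0}} (1/(|T|+1))·C((P₀ + Σ_{i∈T} I(i))/(1 + Σ_{i∉S, i≥1} I(i))) ≤ min_{l∈[0:k]} (1/(l+1))·C((P₀ + Σ_{i=k−l+1}^k I(i))/(1 + Σ_{i>k} I(i))), where C(x)=log₂(1+x). -/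
open Finset

section StrongestInterferers

variable {M : Type*} [AddCommMonoid M] [PartialOrder M] [IsOrderedAddMonoid M]
  {I : ℕ → M}

theorem exists_subset_card_sum_le_sum_Icc (hI : AntitoneOn I (Set.Ici 1)) (l : ℕ) :
    ∀ {A : Finset ℕ} {k : ℕ}, 0 ∉ A → #A = k → l ≤ k →
      ∃ T ⊆ A, #T = l ∧ ∑ i ∈ T, I i ≤ ∑ i ∈ Icc (k - l + 1) k, I i := by
  induction l with
  | zero => intro A k _ _ _; exact ⟨∅, empty_subset A, rfl, by simp⟩
  | succ l ih =>
    intro A k hA0 hcard hl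
    obtain ⟨m, rfl⟩ : ∃ m, k = m + 1 := ⟨k - 1, by omega⟩
    have hne : A.Nonempty := card_pos.1 (by omega)
    set a := A.max' hne
    -- `A` consists of `m + 1` distinct positive integers, all at most `a`.
    have hma : m + 1 ≤ a := by
      have hsub : A ⊆ Icc 1 a := fun i hi =>
        mem_Icc.2 ⟨Nat.one_le_iff_ne_zero.2 (ne_of_mem_of_not_mem hi hA0), A.le_max' i hi⟩
      simpa [hcard] using card_le_card hsub
    obtain ⟨T, hTA, hTcard, hTsum⟩ :=
      ih (A := A.erase a) (k := m) (fun h => hA0 (mem_of_mem_erase h))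
        (by rw [card_erase_of_mem (A.max'_mem hne), hcard, Nat.add_sub_cancel]) (by omega)
    have haT : a ∉ T := fun h => notMem_erase a A (hTA h)
    refine ⟨insert a T, insert_subset (A.max'_mem hne) (hTA.trans (erase_subset a A)),
      by rw [card_insert_of_notMem haT, hTcard], ?_⟩
    calc ∑ i ∈ insert a T, I i = ∑ i ∈ T, I i + I a := by rw [sum_insert haT, add_comm]
      _ ≤ ∑ i ∈ Icc (m - l + 1) m, I i + I (m + 1) :=
        add_le_add hTsum (hI (by simp) (by simp; omega) hma)
      _ = ∑ i ∈ Icc (m + 1 - (l + 1) + 1) (m + 1), I i := by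
        rw [sum_Icc_succ_top (by omega)]
        congr 3
        omega

theorem sum_le_sum_Icc_one (hI : AntitoneOn I (Set.Ici 1)) {A : Finset ℕ} (hA0 : 0 ∉ A) :
    ∑ i ∈ A, I i ≤ ∑ i ∈ Icc 1 #A, I i := by
  obtain ⟨T, hTA, hTcard, hTsum⟩ := exists_subset_card_sum_le_sum_Icc hI #A hA0 rfl le_rfl
  rwa [eq_of_subset_of_card_le hTA hTcard.ge, Nat.sub_self] at hTsum

end StrongestInterferers

theorem tsum_nat_add_card_le_tsum_compl {I : ℕ → ℝ} (hI : AntitoneOn I (Set.Ici 1))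
    (hsum : Summable I) {S : Finset ℕ} (hS0 : 0 ∈ S) :
    ∑' i, I (i + #S) ≤ ∑' i : ((S : Set ℕ)ᶜ : Set ℕ), I i := by
  have hS : ∑ i ∈ S, I i ≤ ∑ i ∈ range #S, I i := by
    rw [← insert_erase hS0, sum_insert (notMem_erase 0 S),
      card_insert_of_notMem (notMem_erase 0 S), Nat.range_succ_eq_Icc_zero,
      ← sum_Ioc_add_eq_sum_Icc (Nat.zero_le _), ← Icc_succ_left_eq_Ioc, Nat.succ_eq_succ, add_comm]
    exact add_le_add_left (sum_le_sum_Icc_one hI (notMem_erase 0 S)) _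
  linarith [hsum.sum_add_tsum_compl (s := S), hsum.sum_add_tsum_nat_add #S]

theorem C_le_C_of_le {x y : ℝ} (hx : -1 < x) (hxy : x ≤ y) : C x ≤ C y :=
  Real.logb_le_logb_of_le (by norm_num) (by linarith) (by linarith)

theorem stmt_16 (P0 : ℝ) (hP : 0 < P0) (I : ℕ → ℝ) (hnn : ∀ i, 0 ≤ I i)
    (hanti : ∀ i j, 1 ≤ i → i ≤ j → I j ≤ I i) (hsum : Summable I)
    (k : ℕ) (S : Finset ℕ) (hS0 : 0 ∈ S) (hcard : S.card = k + 1) :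
    (S.erase 0).powerset.inf' ⟨∅, Finset.empty_mem_powerset _⟩
      (fun T => (1 / (T.card + 1 : ℝ)) *
        C ((P0 + ∑ i ∈ T, I i) /
           (1 + ∑' i : ℕ, if i ∉ S ∧ 1 ≤ i then I i else 0)))
    ≤ (Finset.range (k + 1)).inf' Finset.nonempty_range_add_one
      (fun l => (1 / (l + 1 : ℝ)) *
        C ((P0 + ∑ i ∈ Finset.Icc (k - l + 1) k, I i) /
           (1 + ∑' i : ℕ, I (i + k + 1)))) := by
  have hI : AntitoneOn I (Set.Ici 1) := fun i hi j _ hij => hanti i j hi hij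
  have hk : #(S.erase 0) = k := by rw [card_erase_of_mem hS0, hcard, Nat.add_sub_cancel]
  have htail : ∑' i, I (i + k + 1) ≤ ∑' i : ℕ, if i ∉ S ∧ 1 ≤ i then I i else 0 := by
    convert tsum_nat_add_card_le_tsum_compl hI hsum hS0 using 1
    · simp only [hcard, add_assoc]
    · rw [_root_.tsum_subtype]
      refine tsum_congr fun i => ?_
      by_cases hi : i ∈ S
      · simp [hi]
      · simp [hi, Nat.one_le_iff_ne_zero, (ne_of_mem_of_not_mem hS0 hi).symm]
  have htail_nonneg : 0 ≤ ∑' i, I (i + k + 1) := tsum_nonneg fun i => hnn _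
  refine le_inf' _ _ fun l hl => ?_
  obtain ⟨T, hTS, hTcard, hTsum⟩ := exists_subset_card_sum_le_sum_Icc hI l (notMem_erase 0 S) hk
    (Nat.lt_succ_iff.1 (mem_range.1 hl))
  refine (inf'_le _ (mem_powerset.2 hTS)).trans ?_
  rw [hTcard]
  have hT_nonneg : 0 ≤ P0 + ∑ i ∈ T, I i := add_nonneg hP.le (sum_nonneg fun i _ => hnn i)
  refine mul_le_mul_of_nonneg_left (C_le_C_of_le ?_ ?_) (by positivity)
  · have hD : 0 ≤ 1 + ∑' i : ℕ, if i ∉ S ∧ 1 ≤ i then I i else 0 := by linarith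
    linarith [div_nonneg hT_nonneg hD]
  · exact div_le_div₀ (by linarith) (by linarith) (by linarith) (by linarith)
end
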